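/- arXiv:2112.04364 — 2 statements merged into one kernel-verified Lean document; each statement's English description precedes it below -/
import Mathlib

section
/- For α, β > 0, ∫₀^α √(log(1 + β/t)) dt ≤ α·Ψ(β/α), where Ψ(t) = √(log(1+t) + t(log(1+t) − log t)). -/
/-!
Since `√` is concave, Jensen's inequality bounds the mean of `√(log (1 + β / t))` over `(0, α]` by
the square root of the mean of `log (1 + β / t)`. Writing `log (1 + β / t) = log (t + β) - log t`,
that mean is computed exactly, and it equals `Ψ(β / α) ^ 2`.
-/

open MeasureTheory

/-- `Ψ(t) = √(log(1+t) + t(log(1+t) − log t))`. -/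
noncomputable def Psi (t : ℝ) : ℝ :=
  Real.sqrt (Real.log (1 + t) + t * (Real.log (1 + t) - Real.log t))

open Real Set

lemma setAverage_sqrt_le {X : Type*} [MeasurableSpace X] {μ : Measure X} {s : Set X} {f : X → ℝ}
    (h₀ : μ s ≠ 0) (h_top : μ s ≠ ⊤) (hf : ∀ᵐ x ∂μ.restrict s, 0 ≤ f x)
    (hfi : IntegrableOn f s μ) :
    ⨍ x in s, √(f x) ∂μ ≤ √(⨍ x in s, f x ∂μ) := by
  by_cases hgi : IntegrableOn (fun x => √(f x)) s μ
  · exact strictConcaveOn_sqrt.concaveOn.le_map_set_average continuous_sqrt.continuousOn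
      isClosed_Ici h₀ h_top hf hfi hgi
  · -- the average of a non-integrable function is the junk value `0`
    rw [setAverage_eq, integral_undef hgi, smul_zero]
    exact sqrt_nonneg _

lemma Psi_nonneg (t : ℝ) : 0 ≤ Psi t := sqrt_nonneg _

lemma sq_Psi {t : ℝ} (ht : 0 ≤ t) : Psi t ^ 2 = log (1 + t) + t * (log (1 + t) - log t) := by
  refine sq_sqrt (add_nonneg (log_nonneg (by linarith)) (mul_nonneg ht ?_))
  rcases ht.eq_or_lt with rfl | ht
  · simp
  · exact sub_nonneg.2 (log_le_log ht (by linarith))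

lemma intervalIntegrable_log_add (a b : ℝ) :
    IntervalIntegrable (fun t => log (t + b)) volume 0 a := by
  simpa using (intervalIntegral.intervalIntegrable_log' (a := b) (b := a + b)).comp_add_right b

section

variable {a b : ℝ}

lemma eqOn_log_one_add_div (hb : 0 ≤ b) :
    EqOn (fun t => log (1 + b / t)) (fun t => log (t + b) - log t) (Ioi 0) := fun t ht => by
  have ht : 0 < t := ht
  simp only
  rw [one_add_div ht.ne', log_div (by positivity) ht.ne']

lemma integrableOn_log_one_add_div (ha : 0 ≤ a) (hb : 0 ≤ b) :
    IntegrableOn (fun t => log (1 + b / t)) (Ioc 0 a) :=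
  ((intervalIntegrable_iff_integrableOn_Ioc_of_le ha).1
    ((intervalIntegrable_log_add a b).sub intervalIntegral.intervalIntegrable_log')).congr_fun
      ((eqOn_log_one_add_div hb).symm.mono Ioc_subset_Ioi_self) measurableSet_Ioc

lemma integral_log_one_add_div (ha : 0 ≤ a) (hb : 0 ≤ b) :
    ∫ t in Ioc 0 a, log (1 + b / t) = (a + b) * log (a + b) - a * log a - b * log b := by
  rw [setIntegral_congr_fun measurableSet_Ioc ((eqOn_log_one_add_div hb).mono Ioc_subset_Ioi_self),
    ← intervalIntegral.integral_of_le ha, intervalIntegral.integral_sub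
      (intervalIntegrable_log_add a b) intervalIntegral.intervalIntegrable_log',
    intervalIntegral.integral_comp_add_right (fun t => log t), integral_log, integral_log]
  simp only [zero_add, mul_zero, log_zero]
  ring

lemma setAverage_log_one_add_div (ha : 0 < a) (hb : 0 < b) :
    ⨍ t in Ioc 0 a, log (1 + b / t) = Psi (b / a) ^ 2 := by
  rw [setAverage_eq, integral_log_one_add_div ha.le hb.le, sq_Psi (by positivity),
    one_add_div ha.ne', log_div (by positivity) ha.ne', log_div hb.ne' ha.ne']
  simp only [Real.volume_real_Ioc_of_le ha.le, sub_zero, smul_eq_mul]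
  field_simp
  ring

end

/-- For `α, β > 0`, `∫₀^α √(log(1 + β/t)) dt ≤ α·Ψ(β/α)`. -/
theorem integral_sqrt_log_le (α β : ℝ) (hα : 0 < α) (hβ : 0 < β) :
    ∫ t in Set.Ioc (0 : ℝ) α, Real.sqrt (Real.log (1 + β / t)) ≤ α * Psi (β / α) := by
  have hvol : volume (Ioc 0 α) = ENNReal.ofReal α := by simp
  calc ∫ t in Ioc 0 α, √(log (1 + β / t))
      = α * ⨍ t in Ioc 0 α, √(log (1 + β / t)) := by
        rw [setAverage_eq, Real.volume_real_Ioc_of_le hα.le, sub_zero, smul_eq_mul,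
          mul_inv_cancel_left₀ hα.ne']
    _ ≤ α * √(⨍ t in Ioc 0 α, log (1 + β / t)) := by
        gcongr
        refine setAverage_sqrt_le (by simp [hvol, hα]) (by simp [hvol])
          ((ae_restrict_iff' measurableSet_Ioc).2 (.of_forall fun t ht => ?_))
          (integrableOn_log_one_add_div hα.le hβ.le)
        exact log_nonneg (le_add_of_nonneg_right (div_pos hβ ht.1).le)
    _ = α * Psi (β / α) := by
        rw [setAverage_log_one_add_div hα hβ, sqrt_sq (Psi_nonneg _)]
end

section
/- With f^l as in the iterative soft thresholding network, if ‖B_k‖_{2→2} ≤ B_∞, τ_k ≤ τ_∞, and ‖I − τ_{i} B_{i}ᵀ B_{i}‖_{2→2} ≤ α for all indices, then ‖f^l(y)‖₂ ≤ ‖y‖₂ · τ_∞ B_∞ · Σ_{k=1}^{l} α^{l−k}. In particular, if α ≤ 1 then ‖f^l(y)‖₂ ≤ l·τ_∞·B_∞·‖y‖₂. -/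
open ContinuousLinearMap

noncomputable abbrev E (k : ℕ) : Type := EuclideanSpace ℝ (Fin k)

/-- The iterates `f^l(y)` of a soft-thresholding network (0-based layer index:
`B k`, `τ k`, `S k`, `P k` are the data of layer `k+1`):
`f^0(y) = 0` and
`f^{l+1}(y) = P_l (S_l ((I − τ_l B_lᵀB_l) f^l(y) + τ_l B_lᵀ y))`. -/
noncomputable def netIter (d : ℕ → ℕ) (n : ℕ)
    (B : ∀ k, E (d k) →L[ℝ] E n) (τ : ℕ → ℝ)
    (S : ∀ k, E (d k) → E (d k)) (P : ∀ k, E (d k) → E (d (k + 1)))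
    (y : E n) : ∀ l, E (d l)
  | 0 => 0
  | l + 1 =>
      P l (S l ((ContinuousLinearMap.id ℝ (E (d l)) -
          τ l • ((ContinuousLinearMap.adjoint (B l)).comp (B l)))
          (netIter d n B τ S P y l) + τ l • (ContinuousLinearMap.adjoint (B l)) y))

/-! Each layer is an affine map with linear part of norm at most `α` and offset of norm at most
`τ_∞ B_∞ ‖y‖`, followed by contractions; unrolling `u_{l+1} ≤ α u_l + c` from `u_0 = 0` gives
`u_l ≤ c (1 + α + ⋯ + α^{l-1})`, and each power is at most `1` when `α ≤ 1`. -/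

theorem le_mul_geom_sum_of_le_mul_add {u : ℕ → ℝ} {α c : ℝ} (hα : 0 ≤ α) (h0 : u 0 ≤ 0)
    (hstep : ∀ l, u (l + 1) ≤ α * u l + c) (l : ℕ) :
    u l ≤ c * ∑ k ∈ Finset.range l, α ^ k := by
  induction l with
  | zero => simpa using h0
  | succ l ih =>
    calc u (l + 1) ≤ α * u l + c := hstep l
      _ ≤ α * (c * ∑ k ∈ Finset.range l, α ^ k) + c := by gcongr
      _ = c * ∑ k ∈ Finset.range (l + 1), α ^ k := by rw [geom_sum_succ]; ring

theorem geom_sum_le_of_le_one {α : ℝ} (hα₀ : 0 ≤ α) (hα₁ : α ≤ 1) (l : ℕ) :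
    ∑ k ∈ Finset.range l, α ^ k ≤ l := by
  simpa using Finset.sum_le_card_nsmul (Finset.range l) (α ^ ·) 1
    fun k _ => pow_le_one₀ hα₀ hα₁

theorem norm_contractive_comp_gradientStep_le {H K G : Type*}
    [NormedAddCommGroup H] [InnerProductSpace ℝ H] [CompleteSpace H]
    [NormedAddCommGroup K] [InnerProductSpace ℝ K] [CompleteSpace K] [NormedAddCommGroup G]
    (B : H →L[ℝ] K) (τ : ℝ) {S : H → H} {P : H → G}
    (hS : ∀ z, ‖S z‖ ≤ ‖z‖) (hP : ∀ z, ‖P z‖ ≤ ‖z‖) (z : H) (y : K) :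
    ‖P (S ((ContinuousLinearMap.id ℝ H - τ • (adjoint B).comp B) z + τ • adjoint B y))‖ ≤
      ‖ContinuousLinearMap.id ℝ H - τ • (adjoint B).comp B‖ * ‖z‖ + |τ| * ‖B‖ * ‖y‖ := by
  have hadj : ‖adjoint B y‖ ≤ ‖B‖ * ‖y‖ :=
    ((adjoint B).le_opNorm y).trans_eq (by rw [LinearIsometryEquiv.norm_map])
  calc ‖P (S ((ContinuousLinearMap.id ℝ H - τ • (adjoint B).comp B) z + τ • adjoint B y))‖
      ≤ ‖(ContinuousLinearMap.id ℝ H - τ • (adjoint B).comp B) z‖ + ‖τ • adjoint B y‖ :=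
        (hP _).trans ((hS _).trans (norm_add_le _ _))
    _ ≤ ‖ContinuousLinearMap.id ℝ H - τ • (adjoint B).comp B‖ * ‖z‖ + |τ| * (‖B‖ * ‖y‖) := by
        rw [norm_smul, Real.norm_eq_abs]
        gcongr
        exact le_opNorm _ _
    _ = _ := by ring

theorem netIter_norm_le_geom_general (d : ℕ → ℕ) (n : ℕ)
    (B : ∀ k, E (d k) →L[ℝ] E n) (τ : ℕ → ℝ)
    (S : ∀ k, E (d k) → E (d k)) (P : ∀ k, E (d k) → E (d (k + 1)))
    (Binf τinf α : ℝ) (hBinf : 0 ≤ Binf) (hτinf : 0 ≤ τinf) (hα : 0 ≤ α)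
    (hτ : ∀ k, 0 < τ k)
    (hS : ∀ k z, ‖S k z‖ ≤ ‖z‖) (hP : ∀ k z, ‖P k z‖ ≤ ‖z‖)
    (hB : ∀ k, ‖B k‖ ≤ Binf) (hτ' : ∀ k, τ k ≤ τinf)
    (hI : ∀ i, ‖ContinuousLinearMap.id ℝ (E (d i)) -
        τ i • ((ContinuousLinearMap.adjoint (B i)).comp (B i))‖ ≤ α)
    (y : E n) (l : ℕ) :
    ‖netIter d n B τ S P y l‖ ≤ ‖y‖ * (τinf * Binf * ∑ k ∈ Finset.range l, α ^ k) ∧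
      (α ≤ 1 → ‖netIter d n B τ S P y l‖ ≤ l * τinf * Binf * ‖y‖) := by
  have hstep (m : ℕ) : ‖netIter d n B τ S P y (m + 1)‖ ≤
      α * ‖netIter d n B τ S P y m‖ + τinf * Binf * ‖y‖ := by
    refine (norm_contractive_comp_gradientStep_le (B m) (τ m) (hS m) (hP m) _ y).trans ?_
    rw [abs_of_pos (hτ m)]
    gcongr
    exacts [hI m, hτ' m, hB m]
  have hgeom := le_mul_geom_sum_of_le_mul_add (u := fun m => ‖netIter d n B τ S P y m‖) hα
    norm_zero.le hstep l
  refine ⟨hgeom.trans_eq (by ring), fun hα₁ => hgeom.trans ?_⟩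
  calc τinf * Binf * ‖y‖ * ∑ k ∈ Finset.range l, α ^ k ≤ τinf * Binf * ‖y‖ * l := by
        gcongr
        exact geom_sum_le_of_le_one hα hα₁ l
    _ = l * τinf * Binf * ‖y‖ := by ring

/-- If `‖B_k‖ ≤ B_∞`, `τ_k ≤ τ_∞` and `‖I − τ_i B_iᵀB_i‖ ≤ α` for all indices,
then `‖f^l(y)‖ ≤ ‖y‖ · τ_∞ B_∞ · Σ_{k=1}^{l} α^{l−k}`; in particular, if
`α ≤ 1` then `‖f^l(y)‖ ≤ l·τ_∞·B_∞·‖y‖`. -/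
theorem netIter_norm_le_geom (d : ℕ → ℕ) (n : ℕ)
    (B : ∀ k, E (d k) →L[ℝ] E n) (τ lam : ℕ → ℝ)
    (S : ∀ k, E (d k) → E (d k)) (P : ∀ k, E (d k) → E (d (k + 1)))
    (Binf τinf α : ℝ) (hBinf : 0 ≤ Binf) (hτinf : 0 ≤ τinf) (hα : 0 ≤ α)
    (hτ : ∀ k, 0 < τ k) (hlam : ∀ k, 0 < lam k)
    (hS : ∀ k z, ‖S k z‖ ≤ ‖z‖) (hP : ∀ k z, ‖P k z‖ ≤ ‖z‖)
    (hB : ∀ k, ‖B k‖ ≤ Binf) (hτ' : ∀ k, τ k ≤ τinf)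
    (hI : ∀ i, ‖ContinuousLinearMap.id ℝ (E (d i)) -
        τ i • ((ContinuousLinearMap.adjoint (B i)).comp (B i))‖ ≤ α)
    (y : E n) (l : ℕ) :
    ‖netIter d n B τ S P y l‖ ≤ ‖y‖ * (τinf * Binf * ∑ k ∈ Finset.range l, α ^ k) ∧
      (α ≤ 1 → ‖netIter d n B τ S P y l‖ ≤ l * τinf * Binf * ‖y‖) :=
  netIter_norm_le_geom_general d n B τ S P Binf τinf α hBinf hτinf hα hτ hS hP hB hτ' hI y l
end
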